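/- arXiv:0712.3523 — 6 statements merged into one kernel-verified Lean document; each statement's English description precedes it below -/
import Mathlib

section
/- Let M be a right R-module and N an (R,R)-bimodule, {d^M_n} a Δ-higher derivation on M and {d^N_n} a Δ-higher derivation on N (with respect to both module structures of N). Then the family of additive maps d^{M⊗N}_n on M ⊗_R N determined by d^{M⊗N}_n(m ⊗ x) = Σ_{i=0}^{n} d^M_i(m) ⊗ d^N_{n-i}(x) is a Δ-higher derivation on the right R-module M ⊗_R N, i.e. d^{M⊗N}_n((m⊗x)·r) = Σ_{i=0}^{n} d^{M⊗N}_i(m⊗x)·δ_{n-i}(r) for all r ∈ R. -/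
open Finset MulOpposite

/-!
Move `r` across the tensor sign: `(m ⊗ x)·r = m ⊗ (x·r)`. Expanding `D_n(m ⊗ x·r)` by the defining
formula and then each `d^N_{n-i}(x·r)` by the right Leibniz rule of `d^N` gives the triple sum
`Σ_{i+j+k=n} d^M_i(m) ⊗ d^N_j(x)·δ_k(r)`; grouping its terms by `i + j` instead of by `i`
yields `Σ_{l≤n} D_l(m ⊗ x)·δ_{n-l}(r)`.
-/

/-- The two ways of splitting a sum over `i + j + k = n`: first by `i`, or first by `i + j`. -/
theorem Finset.sum_range_diag_assoc {A : Type*} [AddCommMonoid A] (n : ℕ) (f : ℕ → ℕ → ℕ → A) :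
    ∑ i ∈ range (n + 1), ∑ j ∈ range (n - i + 1), f i j (n - i - j) =
      ∑ l ∈ range (n + 1), ∑ i ∈ range (l + 1), f i (l - i) (n - l) := by
  calc ∑ i ∈ range (n + 1), ∑ j ∈ range (n - i + 1), f i j (n - i - j)
      = ∑ i ∈ range (n + 1), ∑ j ∈ range (n + 1 - i), f i j (n - i - j) := by
        refine sum_congr rfl fun i hi ↦ ?_
        rw [mem_range] at hi
        rw [show n + 1 - i = n - i + 1 by omega]
    _ = ∑ l ∈ range (n + 1), ∑ i ∈ range (l + 1), f i (l - i) (n - i - (l - i)) :=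
        (sum_range_diag_flip (n + 1) fun i j ↦ f i j (n - i - j)).symm
    _ = ∑ l ∈ range (n + 1), ∑ i ∈ range (l + 1), f i (l - i) (n - l) := by
        refine sum_congr rfl fun l hl ↦ sum_congr rfl fun i hi ↦ ?_
        rw [mem_range] at hl hi
        rw [show n - i - (l - i) = n - l by omega]

theorem tensor_higherDerivation_general {R M N P : Type*} [Ring R]
    [AddCommGroup M] [Module Rᵐᵒᵖ M]
    [AddCommGroup N] [Module Rᵐᵒᵖ N]
    [AddCommGroup P] [Module Rᵐᵒᵖ P]
    (δ : ℕ → R → R) (dM : ℕ → M → M) (dN : ℕ → N → N) (D : ℕ → P → P)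
    (t : M → N → P)
    (htadd₂ : ∀ (m : M) (x x' : N), t m (x + x') = t m x + t m x')
    (htr : ∀ (m : M) (x : N) (r : R), op r • t m x = t m (op r • x))
    (hdNleibr : ∀ (i : ℕ) (x : N) (r : R),
      dN i (op r • x) = ∑ j ∈ range (i + 1), op (δ (i - j) r) • dN j x)
    (hDdef : ∀ (n : ℕ) (m : M) (x : N),
      D n (t m x) = ∑ i ∈ range (n + 1), t (dM i m) (dN (n - i) x)) :
    ∀ (n : ℕ) (m : M) (x : N) (r : R),
      D n (op r • t m x) = ∑ i ∈ range (n + 1), op (δ (n - i) r) • D i (t m x) := by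
  intro n m x r
  have t_dN_smul (m' : M) (k : ℕ) :
      t m' (dN k (op r • x)) = ∑ j ∈ range (k + 1), op (δ (k - j) r) • t m' (dN j x) := by
    let tm' : N →+ P := AddMonoidHom.mk' (t m') (htadd₂ m')
    simpa only [tm', AddMonoidHom.mk'_apply, map_sum, htr] using congrArg tm' (hdNleibr k x r)
  calc D n (op r • t m x)
      = ∑ i ∈ range (n + 1), ∑ j ∈ range (n - i + 1),
          op (δ (n - i - j) r) • t (dM i m) (dN j x) := by
        simp only [htr, hDdef, t_dN_smul]
    _ = ∑ l ∈ range (n + 1), ∑ i ∈ range (l + 1),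
          op (δ (n - l) r) • t (dM i m) (dN (l - i) x) :=
        sum_range_diag_assoc n fun i j k ↦ op (δ k r) • t (dM i m) (dN j x)
    _ = ∑ l ∈ range (n + 1), op (δ (n - l) r) • D l (t m x) := by
        simp only [hDdef, smul_sum]

/-- Higher derivation on a tensor product `M ⊗_R N` of a right `R`-module `M`
(formalized as `Rᵐᵒᵖ`-module) and an `(R,R)`-bimodule `N`.  Since Mathlib's tensor
product requires a commutative base ring, the tensor product is abstracted as a
right `R`-module `P` together with a balanced biadditive map `t : M → N → P`
(the pure-tensor map, `t m x = m ⊗ x`) which is right `R`-linear in the sense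
`(m ⊗ x)·r = m ⊗ (x·r)`.  If `D_n` is determined on pure tensors by
`D_n(m ⊗ x) = Σ_{i≤n} d^M_i(m) ⊗ d^N_{n-i}(x)`, then `D` satisfies the higher
Leibniz rule `D_n((m⊗x)·r) = Σ_{i≤n} D_i(m⊗x)·δ_{n-i}(r)`. -/
theorem tensor_higherDerivation {R M N P : Type*} [Ring R]
    [AddCommGroup M] [Module Rᵐᵒᵖ M]
    [AddCommGroup N] [Module R N] [Module Rᵐᵒᵖ N] [SMulCommClass R Rᵐᵒᵖ N]
    [AddCommGroup P] [Module Rᵐᵒᵖ P]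
    (δ : ℕ → R → R) (dM : ℕ → M → M) (dN : ℕ → N → N) (D : ℕ → P → P)
    (t : M → N → P)
    (htadd₁ : ∀ (m m' : M) (x : N), t (m + m') x = t m x + t m' x)
    (htadd₂ : ∀ (m : M) (x x' : N), t m (x + x') = t m x + t m x')
    (htbal : ∀ (m : M) (x : N) (r : R), t (op r • m) x = t m (r • x))
    (htr : ∀ (m : M) (x : N) (r : R), op r • t m x = t m (op r • x))
    (hδadd : ∀ (n : ℕ) (a b : R), δ n (a + b) = δ n a + δ n b)
    (hδ0 : ∀ r : R, δ 0 r = r)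
    (hδleib : ∀ (i : ℕ) (r s : R), δ i (r * s) = ∑ j ∈ range (i + 1), δ j r * δ (i - j) s)
    (hdMadd : ∀ (n : ℕ) (x y : M), dM n (x + y) = dM n x + dM n y)
    (hdM0 : ∀ x : M, dM 0 x = x)
    (hdMleib : ∀ (i : ℕ) (x : M) (r : R),
      dM i (op r • x) = ∑ j ∈ range (i + 1), op (δ (i - j) r) • dM j x)
    (hdNadd : ∀ (n : ℕ) (x y : N), dN n (x + y) = dN n x + dN n y)
    (hdN0 : ∀ x : N, dN 0 x = x)
    (hdNleibr : ∀ (i : ℕ) (x : N) (r : R),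
      dN i (op r • x) = ∑ j ∈ range (i + 1), op (δ (i - j) r) • dN j x)
    (hdNleibl : ∀ (i : ℕ) (x : N) (r : R),
      dN i (r • x) = ∑ j ∈ range (i + 1), δ j r • dN (i - j) x)
    (hDadd : ∀ (n : ℕ) (p p' : P), D n (p + p') = D n p + D n p')
    (hDdef : ∀ (n : ℕ) (m : M) (x : N),
      D n (t m x) = ∑ i ∈ range (n + 1), t (dM i m) (dN (n - i) x)) :
    ∀ (n : ℕ) (m : M) (x : N) (r : R),
      D n (op r • t m x) = ∑ i ∈ range (n + 1), op (δ (n - i) r) • D i (t m x) :=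
  tensor_higherDerivation_general δ dM dN D t htadd₂ htr hdNleibr hDdef
end

section
/- Let R be a ring, {δ_n} a higher derivation on R, M a right R-module, and {d_n} a Δ-higher derivation on M. Suppose that for every x ∈ M with dense right annihilator, and every i < n, the annihilators ann_r(d_i(x)) are dense. Then ann_r(d_n(x)) is dense. Consequently, the set of elements of M with dense right annihilator (the Lambek torsion submodule) is closed under every d_n. -/
open Finset MulOpposite

/-- A right ideal (here: an arbitrary subset) `I` of `R` is dense if for all `r, s ∈ R`
with `s ≠ 0` there is `t` with `st ≠ 0` and `rt ∈ I`. -/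
def IsDenseRightIdeal {R : Type*} [Ring R] (I : Set R) : Prop :=
  ∀ r s : R, s ≠ 0 → ∃ t : R, s * t ≠ 0 ∧ r * t ∈ I

/-! Work inside one element `u` of `ann_r(x)`: applying `d_n` to `x u = 0` gives
`d_n(x) u = -∑_{j<n} d_j(x) δ_{n-j}(u)`, and each term on the right is killed by a dense right
ideal (the pullback of `ann_r(d_j x)` along `δ_{n-j}(u)·`). Their intersection is dense, so
`ann_r(d_n(x) u)` is dense for every `u ∈ ann_r(x)`; as `ann_r(x)` itself is dense, this makes
`ann_r(d_n x)` dense. Closure of the torsion submodule is then strong induction on `n`. -/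

namespace IsDenseRightIdeal

variable {R : Type*} [Ring R]

theorem univ : IsDenseRightIdeal (Set.univ : Set R) :=
  fun _ s hs => ⟨1, by rwa [mul_one], trivial⟩

theorem mono {I J : Set R} (hI : IsDenseRightIdeal I) (hIJ : I ⊆ J) : IsDenseRightIdeal J :=
  fun r s hs => (hI r s hs).imp fun _ ⟨hst, hrt⟩ => ⟨hst, hIJ hrt⟩

theorem preimage_mul_left {I : Set R} (hI : IsDenseRightIdeal I) (a : R) :
    IsDenseRightIdeal ((a * ·) ⁻¹' I) := fun r s hs => by
  obtain ⟨t, hst, hrt⟩ := hI (a * r) s hs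
  exact ⟨t, hst, by simpa only [Set.mem_preimage, mul_assoc] using hrt⟩

theorem inter {I J : Set R} (hI : IsDenseRightIdeal I) (hJ : IsDenseRightIdeal J)
    (hI_mul : ∀ r ∈ I, ∀ t, r * t ∈ I) : IsDenseRightIdeal (I ∩ J) := fun r s hs => by
  obtain ⟨t₁, hst₁, hrt₁⟩ := hI r s hs
  obtain ⟨t₂, hst₂, hrt₂⟩ := hJ (r * t₁) (s * t₁) hst₁
  refine ⟨t₁ * t₂, by rwa [← mul_assoc], ?_, ?_⟩
  · rw [← mul_assoc]
    exact hI_mul _ hrt₁ t₂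
  · rwa [← mul_assoc]

theorem of_preimage_mul_left {I J : Set R} (hJ : IsDenseRightIdeal J)
    (h : ∀ u ∈ J, IsDenseRightIdeal ((u * ·) ⁻¹' I)) : IsDenseRightIdeal I := fun r s hs => by
  obtain ⟨t₀, hst₀, hu⟩ := hJ r s hs
  obtain ⟨t, hst, hrt⟩ := h (r * t₀) hu 1 (s * t₀) hst₀
  refine ⟨t₀ * t, by rwa [← mul_assoc], ?_⟩
  simpa only [Set.mem_preimage, one_mul, mul_assoc] using hrt

end IsDenseRightIdeal

section RightAnnihilator

variable (R : Type*) {M : Type*} [Ring R] [AddCommGroup M] [Module Rᵐᵒᵖ M]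

def rightAnn (y : M) : Set R := {r : R | op r • y = 0}

variable {R}

theorem mul_mem_rightAnn {y : M} {r : R} (hr : r ∈ rightAnn R y) (t : R) :
    r * t ∈ rightAnn R y := by
  simp only [rightAnn, Set.mem_ofPred_eq, op_mul, mul_smul] at hr ⊢
  rw [hr, smul_zero]

theorem rightAnn_smul (a : R) (y : M) : rightAnn R (op a • y) = (a * ·) ⁻¹' rightAnn R y := by
  ext t
  simp only [rightAnn, Set.mem_ofPred_eq, Set.mem_preimage, op_mul, mul_smul]

theorem IsDenseRightIdeal.rightAnn_smul {y : M} (hy : IsDenseRightIdeal (rightAnn R y)) (a : R) :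
    IsDenseRightIdeal (rightAnn R (op a • y)) := by
  rw [_root_.rightAnn_smul]
  exact hy.preimage_mul_left a

theorem rightAnn_neg (y : M) : rightAnn R (-y) = rightAnn R y := by
  ext t
  simp only [rightAnn, Set.mem_ofPred_eq, smul_neg, neg_eq_zero]

theorem biInter_rightAnn_subset_rightAnn_sum {ι : Type*} (s : Finset ι) (y : ι → M) :
    ⋂ i ∈ s, rightAnn R (y i) ⊆ rightAnn R (∑ i ∈ s, y i) := fun t ht => by
  simp only [Set.mem_iInter] at ht
  simp only [rightAnn, Set.mem_ofPred_eq, Finset.smul_sum]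
  exact Finset.sum_eq_zero fun i hi => ht i hi

theorem isDenseRightIdeal_biInter_rightAnn {ι : Type*} (s : Finset ι) (y : ι → M)
    (hy : ∀ i ∈ s, IsDenseRightIdeal (rightAnn R (y i))) :
    IsDenseRightIdeal (⋂ i ∈ s, rightAnn R (y i)) := by
  classical
  induction s using Finset.induction_on with
  | empty => simpa using IsDenseRightIdeal.univ
  | insert i s _ ih =>
    rw [Finset.set_biInter_insert]
    exact (hy i (mem_insert_self i s)).inter (ih fun j hj => hy j (mem_insert_of_mem hj))
      fun _ hr t => mul_mem_rightAnn hr t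

end RightAnnihilator

section HigherDerivation

variable {R M : Type*} [Ring R] [AddCommGroup M] [Module Rᵐᵒᵖ M] {δ : ℕ → R → R} {d : ℕ → M → M}

theorem smul_apply_eq_neg_sum_of_smul_eq_zero (hδ0 : ∀ r : R, δ 0 r = r)
    (hdleib : ∀ (i : ℕ) (x : M) (r : R),
      d i (op r • x) = ∑ j ∈ range (i + 1), op (δ (i - j) r) • d j x)
    (hd_zero : ∀ n, d n 0 = 0) {x : M} {u : R} (hux : op u • x = 0) (n : ℕ) :
    op u • d n x = -∑ j ∈ range n, op (δ (n - j) u) • d j x := by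
  have h := hdleib n x u
  rw [hux, hd_zero, sum_range_succ, Nat.sub_self, hδ0] at h
  exact eq_neg_of_add_eq_zero_right h.symm

theorem isDenseRightIdeal_rightAnn_apply (hδ0 : ∀ r : R, δ 0 r = r)
    (hdleib : ∀ (i : ℕ) (x : M) (r : R),
      d i (op r • x) = ∑ j ∈ range (i + 1), op (δ (i - j) r) • d j x)
    (hd_zero : ∀ n, d n 0 = 0) {n : ℕ} {x : M} (hx : IsDenseRightIdeal (rightAnn R x))
    (hlt : ∀ i < n, IsDenseRightIdeal (rightAnn R (d i x))) :
    IsDenseRightIdeal (rightAnn R (d n x)) := by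
  refine hx.of_preimage_mul_left fun u hux => ?_
  have hterms := isDenseRightIdeal_biInter_rightAnn (range n)
    (fun j => op (δ (n - j) u) • d j x) fun j hj => (hlt j (mem_range.mp hj)).rightAnn_smul _
  rw [← rightAnn_smul, smul_apply_eq_neg_sum_of_smul_eq_zero hδ0 hdleib hd_zero hux, rightAnn_neg]
  exact hterms.mono (biInter_rightAnn_subset_rightAnn_sum _ _)

end HigherDerivation

theorem lambekTorsion_closed_under_higherDerivation_general {R M : Type*} [Ring R]
    [AddCommGroup M] [Module Rᵐᵒᵖ M]
    (δ : ℕ → R → R) (d : ℕ → M → M)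
    (hδ0 : ∀ r : R, δ 0 r = r)
    (hdadd : ∀ (n : ℕ) (x y : M), d n (x + y) = d n x + d n y)
    (hdleib : ∀ (i : ℕ) (x : M) (r : R),
      d i (op r • x) = ∑ j ∈ range (i + 1), op (δ (i - j) r) • d j x) :
    (∀ (n : ℕ) (x : M), IsDenseRightIdeal {r : R | op r • x = 0} →
      (∀ i < n, IsDenseRightIdeal {r : R | op r • d i x = 0}) →
      IsDenseRightIdeal {r : R | op r • d n x = 0}) ∧
    (∀ x : M, IsDenseRightIdeal {r : R | op r • x = 0} →
      ∀ n : ℕ, IsDenseRightIdeal {r : R | op r • d n x = 0}) := by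
  have hd_zero : ∀ n, d n 0 = 0 := fun n => (AddMonoidHom.mk' (d n) (hdadd n)).map_zero
  have step : ∀ (n : ℕ) (x : M), IsDenseRightIdeal (rightAnn R x) →
      (∀ i < n, IsDenseRightIdeal (rightAnn R (d i x))) →
      IsDenseRightIdeal (rightAnn R (d n x)) :=
    fun _ _ => isDenseRightIdeal_rightAnn_apply hδ0 hdleib hd_zero
  refine ⟨step, fun x hx n => ?_⟩
  induction n using Nat.strong_induction_on with
  | _ n ih => exact step n x hx ih

/-- If `ann_r(d_i x)` is dense for all `i < n` (and `ann_r x` is dense), then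
`ann_r(d_n x)` is dense; consequently the Lambek torsion submodule is closed under
every `d_n`.  Right modules are formalized as `Rᵐᵒᵖ`-modules, `x·r = op r • x`. -/
theorem lambekTorsion_closed_under_higherDerivation {R M : Type*} [Ring R]
    [AddCommGroup M] [Module Rᵐᵒᵖ M]
    (δ : ℕ → R → R) (d : ℕ → M → M)
    (hδadd : ∀ (n : ℕ) (a b : R), δ n (a + b) = δ n a + δ n b)
    (hδ0 : ∀ r : R, δ 0 r = r)
    (hδleib : ∀ (i : ℕ) (r s : R), δ i (r * s) = ∑ j ∈ range (i + 1), δ j r * δ (i - j) s)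
    (hdadd : ∀ (n : ℕ) (x y : M), d n (x + y) = d n x + d n y)
    (hd0 : ∀ x : M, d 0 x = x)
    (hdleib : ∀ (i : ℕ) (x : M) (r : R),
      d i (op r • x) = ∑ j ∈ range (i + 1), op (δ (i - j) r) • d j x) :
    (∀ (n : ℕ) (x : M), IsDenseRightIdeal {r : R | op r • x = 0} →
      (∀ i < n, IsDenseRightIdeal {r : R | op r • d i x = 0}) →
      IsDenseRightIdeal {r : R | op r • d n x = 0}) ∧
    (∀ x : M, IsDenseRightIdeal {r : R | op r • x = 0} →
      ∀ n : ℕ, IsDenseRightIdeal {r : R | op r • d n x = 0}) :=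
  lambekTorsion_closed_under_higherDerivation_general δ d hδ0 hdadd hdleib
end

section
/- Let R be a ring with derivation δ, M a right R-module, and d a δ-derivation on M. If x ∈ M has dense right annihilator, then d(x) has dense right annihilator. -/
open MulOpposite

/-! If `r t₁` annihilates `x`, the Leibniz rule gives `d(x) (r t₁) = -x δ(r t₁)`, so a second
application of density, choosing `t₂` with `x δ(r t₁) t₂ = 0` and `s t₁ t₂ ≠ 0`, makes
`r t₁ t₂` annihilate `d(x)`. -/

theorem IsDenseRightIdeal.of_forall_mem_exists {R : Type*} [Ring R] {I J : Set R}
    (hI : IsDenseRightIdeal I) (hIJ : ∀ a ∈ I, ∃ b : R, ∀ t : R, b * t ∈ I → a * t ∈ J) :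
    IsDenseRightIdeal J := by
  intro r s hs
  obtain ⟨t₁, hst₁, hrt₁⟩ := hI r s hs
  obtain ⟨b, hb⟩ := hIJ _ hrt₁
  obtain ⟨t₂, hst₂, hbt₂⟩ := hI b (s * t₁) hst₁
  exact ⟨t₁ * t₂, by rwa [← mul_assoc], by simpa only [mul_assoc] using hb t₂ hbt₂⟩

theorem op_mul_smul_eq_zero_of_leibniz {R M : Type*} [Ring R] [AddCommGroup M]
    [Module Rᵐᵒᵖ M] {δ : R → R} {d : M → M} (hd0 : d 0 = 0)
    (hdleib : ∀ (x : M) (r : R), d (op r • x) = op r • d x + op (δ r) • x)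
    {x : M} {a t : R} (ha : op a • x = 0) (ht : op (δ a * t) • x = 0) :
    op (a * t) • d x = 0 := by
  have hdx : op a • d x = -(op (δ a) • x) :=
    eq_neg_of_add_eq_zero_left (by rw [← hdleib, ha, hd0])
  calc op (a * t) • d x = op t • op a • d x := by rw [op_mul, mul_smul]
    _ = -(op (δ a * t) • x) := by rw [hdx, smul_neg, ← mul_smul, ← op_mul]
    _ = 0 := by rw [ht, neg_zero]

theorem denseAnnihilator_derivation_general {R M : Type*} [Ring R]
    [AddCommGroup M] [Module Rᵐᵒᵖ M]
    (δ : R → R) (d : M → M)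
    (hdadd : ∀ x y : M, d (x + y) = d x + d y)
    (hdleib : ∀ (x : M) (r : R), d (op r • x) = op r • d x + op (δ r) • x)
    (x : M) (hx : IsDenseRightIdeal {r : R | op r • x = 0}) :
    IsDenseRightIdeal {r : R | op r • d x = 0} := by
  have hd0 : d 0 = 0 := (AddMonoidHom.mk' d hdadd).map_zero
  exact hx.of_forall_mem_exists fun a ha =>
    ⟨δ a, fun _ ht => op_mul_smul_eq_zero_of_leibniz hd0 hdleib ha ht⟩

/-- If `d` is a `δ`-derivation on a right `R`-module `M` (formalized as an
`Rᵐᵒᵖ`-module) and `x ∈ M` has dense right annihilator, then so does `d x`. -/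
theorem denseAnnihilator_derivation {R M : Type*} [Ring R]
    [AddCommGroup M] [Module Rᵐᵒᵖ M]
    (δ : R → R) (d : M → M)
    (hδadd : ∀ a b : R, δ (a + b) = δ a + δ b)
    (hδleib : ∀ a b : R, δ (a * b) = δ a * b + a * δ b)
    (hdadd : ∀ x y : M, d (x + y) = d x + d y)
    (hdleib : ∀ (x : M) (r : R), d (op r • x) = op r • d x + op (δ r) • x)
    (x : M) (hx : IsDenseRightIdeal {r : R | op r • x = 0}) :
    IsDenseRightIdeal {r : R | op r • d x = 0} :=
  denseAnnihilator_derivation_general δ d hdadd hdleib x hx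
end

section
/- Let f : R → S be a ring homomorphism making S a flat epimorphic extension in the following sense: for every r ∈ ker f there exist finitely many r_1,…,r_m ∈ R and q_1,…,q_m ∈ S with r·r_j = 0 for all j and Σ_j f(r_j)q_j = 1. If {δ_n} is a higher derivation on R, then f(δ_n(r)) = 0 for every r ∈ ker f and every n; i.e. ker f is invariant under every δ_n modulo ker f (δ_n(ker f) ⊆ ker f). -/
/-!
If `f r = 0`, pick a witness `r_j, q_j` with `r r_j = 0` and `Σ f(r_j) q_j = 1`. Assuming
`f (δ_i r) = 0` for `i < n`, the Leibniz rule collapses `f (δ_n (r r_j))` to `f (δ_n r · r_j)`,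
and `δ_n (r r_j) = δ_n 0 = 0`. Hence `f (δ_n r) = Σ f (δ_n r · r_j) q_j = 0`.
-/

open Finset

section Leibniz

variable {R : Type*} [Semiring R] {δ : ℕ → R → R}

theorem apply_zero_of_leibniz (h0 : ∀ r : R, δ 0 r = r)
    (hleib : ∀ (n : ℕ) (r s : R), δ n (r * s) = ∑ i ∈ range (n + 1), δ i r * δ (n - i) s)
    (n : ℕ) : δ n 0 = 0 := by
  induction n using Nat.strong_induction_on with
  | _ n ih =>
    calc δ n 0 = ∑ i ∈ range (n + 1), δ i 0 * δ (n - i) 0 := by rw [← hleib, mul_zero]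
      _ = 0 := sum_eq_zero fun i hi => by
        rcases (Nat.lt_succ_iff.mp (mem_range.mp hi)).lt_or_eq with hlt | rfl
        · rw [ih i hlt, zero_mul]
        · rw [Nat.sub_self, h0, mul_zero]

theorem map_apply_mul_eq_map_apply_of_leibniz {S : Type*} [Semiring S] (f : R →+* S)
    (h0 : ∀ r : R, δ 0 r = r)
    (hleib : ∀ (n : ℕ) (r s : R), δ n (r * s) = ∑ i ∈ range (n + 1), δ i r * δ (n - i) s)
    {n : ℕ} {r : R} (hlt : ∀ i < n, f (δ i r) = 0) (s : R) :
    f (δ n r * s) = f (δ n (r * s)) := by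
  have hlower : ∑ i ∈ range n, f (δ i r * δ (n - i) s) = 0 :=
    sum_eq_zero fun i hi => by rw [map_mul, hlt i (mem_range.mp hi), zero_mul]
  rw [hleib, sum_range_succ, Nat.sub_self, h0, map_add, map_sum, hlower, zero_add]

end Leibniz

theorem eq_zero_of_mul_eq_zero_of_sum_mul_eq_one {S ι : Type*} [Semiring S] {s : Finset ι}
    {x : S} {a q : ι → S} (hx : ∀ j ∈ s, x * a j = 0) (hone : ∑ j ∈ s, a j * q j = 1) :
    x = 0 :=
  calc x = x * ∑ j ∈ s, a j * q j := by rw [hone, mul_one]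
    _ = ∑ j ∈ s, x * a j * q j := by simp only [mul_sum, mul_assoc]
    _ = 0 := sum_eq_zero fun j hj => by rw [hx j hj, zero_mul]

theorem ker_invariant_of_flat_epi_general {R S : Type*} [Ring R] [Ring S]
    (f : R →+* S)
    (hflat : ∀ r : R, f r = 0 →
      ∃ (m : ℕ) (rs : Fin m → R) (qs : Fin m → S),
        (∀ j, r * rs j = 0) ∧ (∑ j, f (rs j) * qs j = 1))
    (δ : ℕ → R → R)
    (h0 : ∀ r : R, δ 0 r = r)
    (hleib : ∀ (n : ℕ) (r s : R), δ n (r * s) = ∑ i ∈ range (n + 1), δ i r * δ (n - i) s) :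
    ∀ r : R, f r = 0 → ∀ n : ℕ, f (δ n r) = 0 := by
  intro r hr n
  obtain ⟨m, rs, qs, hann, hone⟩ := hflat r hr
  induction n using Nat.strong_induction_on with
  | _ n ih =>
    refine eq_zero_of_mul_eq_zero_of_sum_mul_eq_one (fun j _ => ?_) hone
    rw [← map_mul, map_apply_mul_eq_map_apply_of_leibniz f h0 hleib ih, hann j,
      apply_zero_of_leibniz h0 hleib, map_zero]

/-- If `f : R → S` is a flat epimorphic (perfect) ring extension, i.e. every
`r ∈ ker f` admits a finite flatness witness `r_1,…,r_m ∈ R`, `q_1,…,q_m ∈ S` with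
`r·r_j = 0` and `Σ_j f(r_j)q_j = 1`, then `ker f` is invariant under every member
of a higher derivation `{δ_n}` on `R`. -/
theorem ker_invariant_of_flat_epi {R S : Type*} [Ring R] [Ring S]
    (f : R →+* S)
    (hflat : ∀ r : R, f r = 0 →
      ∃ (m : ℕ) (rs : Fin m → R) (qs : Fin m → S),
        (∀ j, r * rs j = 0) ∧ (∑ j, f (rs j) * qs j = 1))
    (δ : ℕ → R → R)
    (hadd : ∀ (n : ℕ) (a b : R), δ n (a + b) = δ n a + δ n b)
    (h0 : ∀ r : R, δ 0 r = r)
    (hleib : ∀ (n : ℕ) (r s : R), δ n (r * s) = ∑ i ∈ range (n + 1), δ i r * δ (n - i) s) :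
    ∀ r : R, f r = 0 → ∀ n : ℕ, f (δ n r) = 0 :=
  ker_invariant_of_flat_epi_general f hflat δ h0 hleib
end

section
/- Let M, N be right R-modules with N torsion-free and M/q(M) torsion for a hereditary torsion theory τ (where q : M → N is an R-map with torsion kernel and cokernel). If two Δ-higher derivations {d'_n} and {d''_n} on N both extend a Δ-higher derivation {d_n} on M (i.e. d'_n ∘ q = q ∘ d_n = d''_n ∘ q for all n), then d'_n = d''_n for all n. In particular, extensions of higher derivations to modules of quotients are unique. -/
open Finset MulOpposite

/-! Once `d'_i = d''_i` for `i < n`, the Leibniz rule leaves only the top term `(d'_n y) δ_0(r)`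
with `δ_0(r) = r`, so `D = d'_n - d''_n` satisfies `D (y r) = (D y) r`. For `y r ∈ q(M)` both
extensions send `y r` to `q (d_n m)`, so `D y` is killed by the right ideal
`{r | y r ∈ q(M)}`, which lies in the Gabriel filter; torsion-freeness of `N` gives `D y = 0`. -/

theorem sub_map_op_smul_of_eq_of_lt {R N : Type*} [Monoid R] [AddCommGroup N]
    [DistribMulAction Rᵐᵒᵖ N] {δ : ℕ → R → R} {d' d'' : ℕ → N → N} {n : ℕ}
    (hδ0 : ∀ r : R, δ 0 r = r)
    (hd'leib : ∀ (x : N) (r : R),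
      d' n (op r • x) = ∑ j ∈ range (n + 1), op (δ (n - j) r) • d' j x)
    (hd''leib : ∀ (x : N) (r : R),
      d'' n (op r • x) = ∑ j ∈ range (n + 1), op (δ (n - j) r) • d'' j x)
    (hlt : ∀ j < n, d' j = d'' j) (y : N) (r : R) :
    d' n (op r • y) - d'' n (op r • y) = op r • (d' n y - d'' n y) := by
  have hlower : ∑ j ∈ range n, op (δ (n - j) r) • d' j y
      = ∑ j ∈ range n, op (δ (n - j) r) • d'' j y :=
    sum_congr rfl fun j hj => by rw [hlt j (mem_range.mp hj)]
  rw [hd'leib, hd''leib, sum_range_succ, sum_range_succ, hlower, add_sub_add_left_eq_sub,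
    Nat.sub_self, hδ0, smul_sub]

theorem higherDerivation_extension_unique_general {R M N : Type*} [Ring R]
    [AddCommGroup M] [Module Rᵐᵒᵖ M] [AddCommGroup N] [Module Rᵐᵒᵖ N]
    (F : Set (Set R))
    (hFup : ∀ I ∈ F, ∀ J : Set R, I ⊆ J → J ∈ F)
    (q : M →ₗ[Rᵐᵒᵖ] N)
    (hNtf : ∀ y : N, {r : R | op r • y = 0} ∈ F → y = 0)
    (hcoker : ∀ y : N, {r : R | ∃ m : M, op r • y = q m} ∈ F)
    (δ : ℕ → R → R) (d : ℕ → M → M) (d' d'' : ℕ → N → N)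
    (hδ0 : ∀ r : R, δ 0 r = r)
    (hd'leib : ∀ (i : ℕ) (x : N) (r : R),
      d' i (op r • x) = ∑ j ∈ range (i + 1), op (δ (i - j) r) • d' j x)
    (hd''leib : ∀ (i : ℕ) (x : N) (r : R),
      d'' i (op r • x) = ∑ j ∈ range (i + 1), op (δ (i - j) r) • d'' j x)
    (hext' : ∀ (n : ℕ) (m : M), d' n (q m) = q (d n m))
    (hext'' : ∀ (n : ℕ) (m : M), d'' n (q m) = q (d n m)) :
    ∀ n : ℕ, d' n = d'' n := by
  intro n
  induction n using Nat.strong_induction_on with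
  | _ n ih =>
    funext y
    refine sub_eq_zero.mp (hNtf _ (hFup _ (hcoker y) _ ?_))
    rintro r ⟨m, hm⟩
    rw [Set.mem_ofPred_eq,
      ← sub_map_op_smul_of_eq_of_lt hδ0 (hd'leib n) (hd''leib n) ih, hm, hext', hext'', sub_self]

/-- Uniqueness of extensions of higher derivations to modules of quotients.
The hereditary torsion theory is given by its Gabriel filter `F` of right ideals
(formalized as subsets of `R`): an element `y` of a right module is torsion iff
`ann_r(y) ∈ F`.  Suppose `q : M → N` is an `R`-map with `N` torsion-free and
`N/q(M)` torsion.  If two `Δ`-higher derivations `{d'_n}`, `{d''_n}` on `N` both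
extend a `Δ`-higher derivation `{d_n}` on `M`, then `d'_n = d''_n` for all `n`.
Right modules are formalized as `Rᵐᵒᵖ`-modules, `x·r = op r • x`. -/
theorem higherDerivation_extension_unique {R M N : Type*} [Ring R]
    [AddCommGroup M] [Module Rᵐᵒᵖ M] [AddCommGroup N] [Module Rᵐᵒᵖ N]
    (F : Set (Set R))
    (hFtop : (Set.univ : Set R) ∈ F)
    (hFup : ∀ I ∈ F, ∀ J : Set R, I ⊆ J → J ∈ F)
    (hFinter : ∀ I ∈ F, ∀ J ∈ F, I ∩ J ∈ F)
    (hFquot : ∀ I ∈ F, ∀ r : R, {s : R | r * s ∈ I} ∈ F)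
    (q : M →ₗ[Rᵐᵒᵖ] N)
    (hNtf : ∀ y : N, {r : R | op r • y = 0} ∈ F → y = 0)
    (hcoker : ∀ y : N, {r : R | ∃ m : M, op r • y = q m} ∈ F)
    (δ : ℕ → R → R) (d : ℕ → M → M) (d' d'' : ℕ → N → N)
    (hδadd : ∀ (n : ℕ) (a b : R), δ n (a + b) = δ n a + δ n b)
    (hδ0 : ∀ r : R, δ 0 r = r)
    (hδleib : ∀ (i : ℕ) (r s : R), δ i (r * s) = ∑ j ∈ range (i + 1), δ j r * δ (i - j) s)
    (hdadd : ∀ (n : ℕ) (x y : M), d n (x + y) = d n x + d n y)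
    (hd0 : ∀ x : M, d 0 x = x)
    (hdleib : ∀ (i : ℕ) (x : M) (r : R),
      d i (op r • x) = ∑ j ∈ range (i + 1), op (δ (i - j) r) • d j x)
    (hd'add : ∀ (n : ℕ) (x y : N), d' n (x + y) = d' n x + d' n y)
    (hd'0 : ∀ x : N, d' 0 x = x)
    (hd'leib : ∀ (i : ℕ) (x : N) (r : R),
      d' i (op r • x) = ∑ j ∈ range (i + 1), op (δ (i - j) r) • d' j x)
    (hd''add : ∀ (n : ℕ) (x y : N), d'' n (x + y) = d'' n x + d'' n y)
    (hd''0 : ∀ x : N, d'' 0 x = x)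
    (hd''leib : ∀ (i : ℕ) (x : N) (r : R),
      d'' i (op r • x) = ∑ j ∈ range (i + 1), op (δ (i - j) r) • d'' j x)
    (hext' : ∀ (n : ℕ) (m : M), d' n (q m) = q (d n m))
    (hext'' : ∀ (n : ℕ) (m : M), d'' n (q m) = q (d n m)) :
    ∀ n : ℕ, d' n = d'' n :=
  higherDerivation_extension_unique_general F hFup q hNtf hcoker δ d d' d'' hδ0 hd'leib hd''leib
    hext' hext''
end

section
/- Let 𝔉 be a higher differential Gabriel filter of order n on R (for every higher derivation of order n and every I ∈ 𝔉 there is J ∈ 𝔉 with δ_i(J) ⊆ I for all i ≤ n). Then for every right R-module M, every higher derivation {δ_i}_{i≤n} on R, every Δ-higher derivation {d_i}_{i≤n} on M, and every x ∈ M with ann_r(x) ∈ 𝔉, also ann_r(d_i(x)) ∈ 𝔉 for all i ≤ n; i.e. d_i(𝕋(M)) ⊆ 𝕋(M). -/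
open Finset MulOpposite

/-- `δ` is a higher derivation of order `n` on `R`. -/
def IsHigherDerivationOfOrder {R : Type*} [Ring R] (n : ℕ) (δ : ℕ → R → R) : Prop :=
  (∀ i ≤ n, ∀ a b : R, δ i (a + b) = δ i a + δ i b) ∧
  (∀ r : R, δ 0 r = r) ∧
  (∀ i ≤ n, ∀ r s : R, δ i (r * s) = ∑ j ∈ range (i + 1), δ j r * δ (i - j) s)

/-- `d` is a `Δ`-higher derivation of order `n` on the right `R`-module `M`
(formalized as an `Rᵐᵒᵖ`-module, `x·r = op r • x`). -/
def IsDeltaHigherDerivationOfOrder {R M : Type*} [Ring R] [AddCommGroup M]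
    [Module Rᵐᵒᵖ M] (n : ℕ) (δ : ℕ → R → R) (d : ℕ → M → M) : Prop :=
  (∀ i ≤ n, ∀ x y : M, d i (x + y) = d i x + d i y) ∧
  (∀ x : M, d 0 x = x) ∧
  (∀ i ≤ n, ∀ (x : M) (r : R), d i (op r • x) = ∑ j ∈ range (i + 1), op (δ (i - j) r) • d j x)

/-!
Strong induction on `i`: once `ann(x)` and `ann(d_j x)` for `j < i` lie in `F`, so does their
intersection `K`, and the differential filter gives `J ∈ F` with `δ_k(J) ⊆ K` for all `k ≤ n`.
For `r ∈ J`, expanding `0 = d_i(x r)` by the Leibniz rule kills every term but `d_i(x) r`,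
so `J ⊆ ann(d_i x)`.
-/

theorem inter_biInter_range_mem {α : Type*} {F : Set (Set α)}
    (hFinter : ∀ I ∈ F, ∀ J ∈ F, I ∩ J ∈ F) {I : Set α} (hI : I ∈ F) {A : ℕ → Set α} :
    ∀ {m : ℕ}, (∀ j < m, A j ∈ F) → I ∩ ⋂ j ∈ range m, A j ∈ F
  | 0, _ => by simpa using hI
  | m + 1, hA => by
    have hprev := inter_biInter_range_mem hFinter hI fun j hj => hA j (hj.trans m.lt_succ_self)
    rw [range_add_one, set_biInter_insert, Set.inter_left_comm, Set.inter_comm]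
    exact hFinter _ hprev _ (hA m m.lt_succ_self)

section DeltaHigherDerivation

variable {R M : Type*} [Ring R] [AddCommGroup M] [Module Rᵐᵒᵖ M] {n : ℕ} {δ : ℕ → R → R}
  {d : ℕ → M → M}

theorem IsDeltaHigherDerivationOfOrder.map_zero (hd : IsDeltaHigherDerivationOfOrder n δ d)
    {i : ℕ} (hi : i ≤ n) : d i 0 = 0 := by
  simpa using hd.1 i hi 0 0

theorem IsDeltaHigherDerivationOfOrder.op_smul_apply_eq_zero
    (hd : IsDeltaHigherDerivationOfOrder n δ d) {i : ℕ} (hi : i ≤ n) {x : M} {r : R}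
    (hδ₀ : δ 0 r = r) (hx : op r • x = 0) (hlower : ∀ j < i, op (δ (i - j) r) • d j x = 0) :
    op r • d i x = 0 := by
  have hexpand := hd.2.2 i hi x r
  rw [hx, hd.map_zero hi, sum_range_succ,
    sum_eq_zero fun j hj => hlower j (mem_range.1 hj), zero_add, Nat.sub_self, hδ₀] at hexpand
  exact hexpand.symm

end DeltaHigherDerivation

theorem torsion_closed_of_higherDifferential_general {R : Type u} [Ring R]
    (F : Set (Set R))
    (hFup : ∀ I ∈ F, ∀ J : Set R, I ⊆ J → J ∈ F)
    (hFinter : ∀ I ∈ F, ∀ J ∈ F, I ∩ J ∈ F)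
    (n : ℕ)
    (hHD : ∀ δ : ℕ → R → R, IsHigherDerivationOfOrder n δ →
      ∀ I ∈ F, ∃ J ∈ F, ∀ i ≤ n, δ i '' J ⊆ I) :
    ∀ (M : Type u) [AddCommGroup M] [Module Rᵐᵒᵖ M]
      (δ : ℕ → R → R) (d : ℕ → M → M),
      IsHigherDerivationOfOrder n δ →
      IsDeltaHigherDerivationOfOrder n δ d →
      ∀ x : M, {r : R | op r • x = 0} ∈ F →
        ∀ i ≤ n, {r : R | op r • d i x = 0} ∈ F := by
  intro M _ _ δ d hδ hd x hx i
  induction i using Nat.strong_induction_on with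
  | _ i ih =>
    intro hi
    have hK : {r : R | op r • x = 0} ∩ ⋂ j ∈ range i, {r : R | op r • d j x = 0} ∈ F :=
      inter_biInter_range_mem hFinter hx fun j hj => ih j hj (hj.le.trans hi)
    obtain ⟨J, hJF, hJK⟩ := hHD δ hδ _ hK
    refine hFup J hJF _ fun r hr => hd.op_smul_apply_eq_zero hi (hδ.2.1 r) ?_ ?_
    · simpa [hδ.2.1] using (hJK 0 n.zero_le ⟨r, hr, rfl⟩).1
    · intro j hj
      exact Set.mem_iInter₂.1 (hJK (i - j) (tsub_le_self.trans hi) ⟨r, hr, rfl⟩).2 j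
        (mem_range.2 hj)

/-- If `F` is a higher differential Gabriel filter of order `n`, then for every right
`R`-module `M`, every higher derivation `{δ_i}` of order `n`, every `Δ`-higher
derivation `{d_i}` of order `n` on `M`, and every `x ∈ M` with `ann_r(x) ∈ F`, also
`ann_r(d_i x) ∈ F` for all `i ≤ n`; i.e. `d_i(𝕋(M)) ⊆ 𝕋(M)`. -/
theorem torsion_closed_of_higherDifferential {R : Type u} [Ring R]
    (F : Set (Set R))
    (hFtop : (Set.univ : Set R) ∈ F)
    (hFup : ∀ I ∈ F, ∀ J : Set R, I ⊆ J → J ∈ F)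
    (hFinter : ∀ I ∈ F, ∀ J ∈ F, I ∩ J ∈ F)
    (hFquot : ∀ I ∈ F, ∀ r : R, {s : R | r * s ∈ I} ∈ F)
    (n : ℕ)
    (hHD : ∀ δ : ℕ → R → R, IsHigherDerivationOfOrder n δ →
      ∀ I ∈ F, ∃ J ∈ F, ∀ i ≤ n, δ i '' J ⊆ I) :
    ∀ (M : Type u) [AddCommGroup M] [Module Rᵐᵒᵖ M]
      (δ : ℕ → R → R) (d : ℕ → M → M),
      IsHigherDerivationOfOrder n δ →
      IsDeltaHigherDerivationOfOrder n δ d →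
      ∀ x : M, {r : R | op r • x = 0} ∈ F →
        ∀ i ≤ n, {r : R | op r • d i x = 0} ∈ F :=
  torsion_closed_of_higherDifferential_general F hFup hFinter n hHD
end
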